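/- arXiv:2401.06519 — 2 statements merged into one kernel-verified Lean document; each statement's English description precedes it below -/
import Mathlib

section
/- Let Π = {p}, I = {1}, and S = {p, ⟨1⟩_{≥1} p, ⟨1⟩_{≥1}⟨1⟩_{≥1} p, ...} be the set of formulae asserting p is reachable in exactly n steps for each n ∈ ℕ. Then no countable disjunction of GMML formulae over (Π, I) is logically equivalent to the negation ¬⋁_{φ∈S} φ (i.e., countable disjunctions of GMML formulae are not closed under negation). -/
/-- Syntax of graded multimodal logic over propositions `P` and indices `I`. -/
inductive GMML (P : Type) (I : Type) : Type
  | top : GMML P I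
  | prop : P → GMML P I
  | neg : GMML P I → GMML P I
  | and : GMML P I → GMML P I → GMML P I
  | dia : I → ℕ → GMML P I → GMML P I

/-- Satisfaction of a GMML formula at a point of a Kripke model. -/
def GMML.Sat {P I W : Type} (R : I → W → W → Prop) (V : P → W → Prop) :
    W → GMML P I → Prop
  | _, .top => True
  | w, .prop p => V p w
  | w, .neg φ => ¬ GMML.Sat R V w φ
  | w, .and φ ψ => GMML.Sat R V w φ ∧ GMML.Sat R V w ψ
  | w, .dia α k φ => k ≤ {v | R α w v ∧ GMML.Sat R V v φ}.ncard

/-- Modal depth of a GMML formula. -/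
def GMML.md {P I : Type} : GMML P I → ℕ
  | .top => 0
  | .prop _ => 0
  | .neg φ => φ.md
  | .and φ ψ => max φ.md ψ.md
  | .dia _ _ φ => φ.md + 1

/-- A finite pointed Kripke model of vocabulary `(P, I)`. -/
structure PKModel (P I : Type) where
  W : Type
  fin : Finite W
  R : I → W → W → Prop
  V : P → W → Prop
  pt : W

/-- Satisfaction at the distinguished point of a pointed model. -/
def PKModel.Sat {P I : Type} (M : PKModel P I) (φ : GMML P I) : Prop :=
  GMML.Sat M.R M.V M.pt φ

/-- The formula `⟨1⟩_{≥1}^n p`, asserting that `p` is reachable in exactly `n` steps. -/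
def reach : ℕ → GMML Unit Unit
  | 0 => .prop ()
  | n + 1 => .dia () 1 (reach n)

/-!
In a model whose accessibility relation is the graph of a function `f`, every world has exactly
one successor, so `⟨α⟩_{≥k} ψ` holds at `w` iff `k = 0`, or `k = 1` and `ψ` holds at `f w`. Hence
the truth of a formula of modal depth `d` at `w` is determined by the valuation along
`w, f w, …, f^[d] w`. Suppose a disjunction `⋁ S` defined unreachability of `p`. It holds on a
single reflexive point where `p` is false, so some `φ ∈ S` does. On the cycle of length `md φ + 2`
with `p` only at its last world, `p` is false at the first `md φ + 1` worlds of the orbit of the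
first world, as on the loop, so `φ` holds there too, although `p` is reachable in `md φ + 1` steps.
-/

def PKModel.ofFun {W : Type} [Finite W] (f : W → W) (V : W → Prop) (w : W) : PKModel Unit Unit :=
  ⟨W, inferInstance, fun _ u v => v = f u, fun _ => V, w⟩

theorem Set.ncard_setOf_eq_and {α : Type*} (a : α) (q : α → Prop) [Decidable (q a)] :
    {x | x = a ∧ q x}.ncard = if q a then 1 else 0 := by
  split_ifs with h
  · rw [← Set.ncard_singleton a]
    congr
    ext x
    exact ⟨And.left, fun hx => ⟨hx, hx ▸ h⟩⟩
  · rw [← Set.ncard_empty α]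
    congr
    ext x
    exact ⟨fun hx => h (hx.1 ▸ hx.2), False.elim⟩

namespace GMML

variable {P I W W' : Type}

open Classical in
theorem sat_dia_graph {f : W → W} {V : P → W → Prop} {w : W} {α : I} {k : ℕ} {φ : GMML P I} :
    Sat (fun _ u v => v = f u) V w (.dia α k φ) ↔
      k ≤ if Sat (fun _ u v => v = f u) V (f w) φ then 1 else 0 := by
  rw [Sat, Set.ncard_setOf_eq_and]

theorem sat_graph_iff_of_iterate {f : W → W} {f' : W' → W'} {V : P → W → Prop}
    {V' : P → W' → Prop} (φ : GMML P I) {w : W} {w' : W'}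
    (hV : ∀ k ≤ φ.md, ∀ p, V p (f^[k] w) ↔ V' p (f'^[k] w')) :
    Sat (fun _ u v => v = f u) V w φ ↔ Sat (fun _ u v => v = f' u) V' w' φ := by
  induction φ generalizing w w' with
  | top => rfl
  | prop p => exact hV 0 (Nat.zero_le _) p
  | neg φ ih => exact not_congr (ih hV)
  | and φ ψ ihφ ihψ =>
    exact and_congr (ihφ fun k hk => hV k (le_max_of_le_left hk))
      (ihψ fun k hk => hV k (le_max_of_le_right hk))
  | dia α n φ ih =>
    have hsucc : Sat (fun _ u v => v = f u) V (f w) φ ↔ Sat (fun _ u v => v = f' u) V' (f' w') φ :=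
      ih fun k hk => hV (k + 1) (Nat.succ_le_succ hk)
    rw [sat_dia_graph, sat_dia_graph]
    by_cases h : Sat (fun _ u v => v = f u) V (f w) φ
    · rw [if_pos h, if_pos (hsucc.1 h)]
    · rw [if_neg h, if_neg (mt hsucc.2 h)]

end GMML

theorem sat_reach_graph_iff {W : Type} {f : W → W} {V : Unit → W → Prop} (n : ℕ) {w : W} :
    GMML.Sat (fun _ u v => v = f u) V w (reach n) ↔ V () (f^[n] w) := by
  induction n generalizing w with
  | zero => rfl
  | succ n ih =>
    rw [reach, GMML.sat_dia_graph, ih, Function.iterate_succ_apply]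
    split_ifs with h <;> simp [h]

theorem PKModel.ofFun_sat_reach_iff {W : Type} [Finite W] {f : W → W} {V : W → Prop} {w : W}
    (n : ℕ) : (PKModel.ofFun f V w).Sat (reach n) ↔ V (f^[n] w) :=
  sat_reach_graph_iff n

theorem PKModel.ofFun_sat_iff_of_iterate {W W' : Type} [Finite W] [Finite W'] {f : W → W}
    {f' : W' → W'} {V : W → Prop} {V' : W' → Prop} {w : W} {w' : W'} (φ : GMML Unit Unit)
    (hV : ∀ k ≤ φ.md, V (f^[k] w) ↔ V' (f'^[k] w')) :
    (PKModel.ofFun f V w).Sat φ ↔ (PKModel.ofFun f' V' w').Sat φ :=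
  GMML.sat_graph_iff_of_iterate φ fun k hk _ => hV k hk

theorem Fin.val_add_one_iterate_zero {n k : ℕ} (hk : k ≤ n) :
    ((fun i : Fin (n + 1) => i + 1)^[k] 0).val = k := by
  induction k with
  | zero => rfl
  | succ k ih =>
    have hk' := ih (by omega)
    rw [Function.iterate_succ_apply', Fin.val_add_one_of_lt' (by omega), hk']

/-- no countable disjunction of GMML formulae over `Π = {p}`, `I = {1}` is
logically equivalent (over finite pointed models) to the negation of the disjunction
`⋁_n reach n` expressing reachability of `p`. -/
theorem disjunctions_not_closed_under_negation :
    ¬ ∃ S : Set (GMML Unit Unit), S.Countable ∧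
      ∀ M : PKModel Unit Unit,
        (∃ φ ∈ S, M.Sat φ) ↔ ¬ (∃ n : ℕ, M.Sat (reach n)) := by
  rintro ⟨S, -, hS⟩
  let loop := PKModel.ofFun id (fun _ : Unit => False) ()
  let cycle (d : ℕ) := PKModel.ofFun (· + 1) (fun i : Fin (d + 2) => i.val = d + 1) 0
  have loop_unreach : ¬ ∃ n, loop.Sat (reach n) := fun ⟨n, hn⟩ =>
    (PKModel.ofFun_sat_reach_iff n).1 hn
  obtain ⟨φ, hφS, hφ⟩ := (hS loop).2 loop_unreach
  have cycle_reach : ∃ n, (cycle φ.md).Sat (reach n) :=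
    ⟨φ.md + 1, (PKModel.ofFun_sat_reach_iff _).2 (Fin.val_add_one_iterate_zero le_rfl)⟩
  have cycle_sat : (cycle φ.md).Sat φ := by
    refine (PKModel.ofFun_sat_iff_of_iterate φ fun k hk => ?_).1 hφ
    rw [Fin.val_add_one_iterate_zero (by omega)]
    exact iff_of_false id (by omega)
  exact (hS (cycle φ.md)).1 ⟨φ, hφS, cycle_sat⟩ cycle_reach
end

section
/- Two finite pointed Kripke models (M,w) and (N,v) satisfy the same full graded multimodal (Π,I)-type of modal depth n if and only if, for every counting multichannel message passing automaton A for (Π,I), the runs of A on (M,w) and (N,v) assign the same state at every round t ≤ n. -/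
/-- Finite conjunction of a list of formulae. -/
def GMML.bigAnd {P I : Type} : List (GMML P I) → GMML P I
  | [] => .top
  | φ :: l => .and φ (GMML.bigAnd l)

/-- Exact-count modality `⟨α⟩_{=k} φ := ⟨α⟩_{≥k} φ ∧ ¬⟨α⟩_{≥k+1} φ`. -/
def GMML.diaEq {P I : Type} (α : I) (k : ℕ) (φ : GMML P I) : GMML P I :=
  .and (.dia α k φ) (.neg (.dia α (k + 1) φ))

open Classical in
/-- The depth-0 type: the conjunction specifying exactly which propositions hold. -/
noncomputable def type0 {P I W : Type} [Fintype P] (V : P → W → Prop) (w : W) :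
    GMML P I :=
  GMML.bigAnd ((Finset.univ : Finset P).toList.map fun p =>
    if V p w then .prop p else .neg (.prop p))

open Classical in
/-- The finset of `α`-successors of `w`. -/
noncomputable def succs {I W : Type} [Fintype W] (R : I → W → W → Prop)
    (α : I) (w : W) : Finset W :=
  Finset.univ.filter fun v => R α w v

open Classical in
/-- The full graded multimodal `(P, I)`-type of modal depth `n` of a pointed model:
it records the propositional information and, recursively, for each `α ∈ I`
the exact number of `α`-successors satisfying each full type of depth `n`
(together with the exact out-degree). -/
noncomputable def fullType {P I W : Type} [Fintype P] [Fintype I] [Fintype W]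
    (R : I → W → W → Prop) (V : P → W → Prop) : ℕ → W → GMML P I
  | 0, w => type0 V w
  | n + 1, w =>
      .and (type0 V w)
        (GMML.bigAnd ((Finset.univ : Finset I).toList.flatMap fun α =>
          .dia α 0 (fullType R V n w) ::
          GMML.diaEq α (succs R α w).card .top ::
          (((succs R α w).image (fullType R V n)).toList.map fun σ =>
            GMML.diaEq α
              ((succs R α w).filter fun v => fullType R V n v = σ).card σ)))

/-- The full type of modal depth `n` at an arbitrary point of a pointed model. -/
noncomputable def PKModel.fullTypeAt {P I : Type} [Fintype P] [Fintype I]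
    (M : PKModel P I) (n : ℕ) (w : M.W) : GMML P I :=
  haveI := M.fin
  letI : Fintype M.W := Fintype.ofFinite M.W
  fullType M.R M.V n w

/-- The full graded multimodal type of modal depth `n` of the pointed model. -/
noncomputable def PKModel.fullType {P I : Type} [Fintype P] [Fintype I]
    (M : PKModel P I) (n : ℕ) : GMML P I :=
  M.fullTypeAt n M.pt

/-- A counting multichannel message passing automaton for `(P, I)` with states `Q`. -/
structure CMMPA (P I Q : Type) where
  π : Set P → Q
  δ : (I → Multiset Q) → Q → Q
  F : Set Q

open Classical in
/-- The run of a CMMPA on a Kripke model: `run A R V t w` is the state of node `w`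
in round `t`; in each round a node receives the multiset of previous states of its
`α`-successors along each channel `α`. -/
noncomputable def CMMPA.run {P I Q W : Type} [Fintype W] (A : CMMPA P I Q)
    (R : I → W → W → Prop) (V : P → W → Prop) : ℕ → W → Q
  | 0, w => A.π {p | V p w}
  | t + 1, w =>
      A.δ (fun α =>
        ((Finset.univ : Finset W).filter fun v => R α w v).val.map
          (CMMPA.run A R V t))
        (CMMPA.run A R V t w)

/-- The run of a CMMPA on a finite pointed Kripke model. -/
noncomputable def PKModel.run {P I Q : Type} (M : PKModel P I) (A : CMMPA P I Q)
    (t : ℕ) (w : M.W) : Q :=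
  haveI := M.fin
  letI : Fintype M.W := Fintype.ofFinite M.W
  A.run M.R M.V t w

section Aux

open Classical

variable {P I : Type}

theorem sat_bigAnd {W : Type} (R : I → W → W → Prop) (V : P → W → Prop) (w : W)
    (l : List (GMML P I)) :
    GMML.Sat R V w (GMML.bigAnd l) ↔ ∀ φ ∈ l, GMML.Sat R V w φ := by
  induction l with
  | nil => simp [GMML.bigAnd, GMML.Sat]
  | cons a l ih => simp [GMML.bigAnd, GMML.Sat, ih]

theorem sat_diaEq {W : Type} (R : I → W → W → Prop) (V : P → W → Prop) (w : W)
    (α : I) (k : ℕ) (φ : GMML P I) :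
    GMML.Sat R V w (GMML.diaEq α k φ) ↔ {v | R α w v ∧ GMML.Sat R V v φ}.ncard = k := by
  simp only [GMML.diaEq, GMML.Sat]
  omega

theorem ncard_filter {W : Type} [Fintype W] (p : W → Prop) [DecidablePred p] :
    {u | p u}.ncard = (Finset.univ.filter p).card := by
  rw [Set.ncard_eq_toFinset_card']
  simp [Set.toFinset_setOf]

theorem bigAnd_inj : ∀ {l1 l2 : List (GMML P I)},
    GMML.bigAnd l1 = GMML.bigAnd l2 → l1 = l2 := by
  intro l1
  induction l1 with
  | nil => intro l2 h; cases l2 with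
    | nil => rfl
    | cons b l2 => simp [GMML.bigAnd] at h
  | cons a l1 ih =>
    intro l2 h
    cases l2 with
    | nil => simp [GMML.bigAnd] at h
    | cons b l2 =>
      simp only [GMML.bigAnd, GMML.and.injEq] at h
      simp [h.1, ih h.2]

theorem sat_type0_self {W : Type} [Fintype P] (R : I → W → W → Prop)
    (V : P → W → Prop) (w : W) :
    GMML.Sat R V w (type0 (I := I) V w) := by
  rw [type0, sat_bigAnd]
  intro φ hφ
  simp only [List.mem_map] at hφ
  obtain ⟨p, -, rfl⟩ := hφ
  by_cases h : V p w <;> simp [h, GMML.Sat]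

theorem type0_eq_iff {W W' : Type} [Fintype P] (V : P → W → Prop) (V' : P → W' → Prop)
    (w : W) (v : W') :
    type0 (I := I) V' v = type0 (I := I) V w ↔ ∀ p, (V' p v ↔ V p w) := by
  constructor
  · intro h p
    rw [type0, type0] at h
    have := bigAnd_inj h
    rw [List.map_inj_left] at this
    have hp := this p (by simp [Finset.mem_toList])
    by_cases h1 : V' p v <;> by_cases h2 : V p w <;> simp_all
  · intro h
    rw [type0, type0]
    congr 1
    refine List.map_congr_left fun p _ => ?_
    by_cases h1 : V p w <;> simp_all

theorem sat_type0_iff {W W' : Type} [Fintype P] (R : I → W → W → Prop) (V : P → W → Prop)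
    (R' : I → W' → W' → Prop) (V' : P → W' → Prop) (w : W) (v : W') :
    GMML.Sat R' V' v (type0 (I := I) V w) ↔ type0 (I := I) V' v = type0 (I := I) V w := by
  rw [type0_eq_iff]
  constructor
  · intro h p
    rw [type0, sat_bigAnd] at h
    have hp := h _ (List.mem_map.2 ⟨p, by simp [Finset.mem_toList], rfl⟩)
    by_cases h1 : V p w <;> simp_all [GMML.Sat]
  · intro h
    have : type0 (I := I) V' v = type0 (I := I) V w := (type0_eq_iff V V' w v).2 h
    rw [← this]
    exact sat_type0_self R' V' v

end Aux
section Aux2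

open Classical

variable {P I : Type} [Fintype P] [Fintype I]

/-- Projection recovering the depth-`n` type from the depth-`n+1` type. -/
def projT (n : ℕ) : GMML P I → GMML P I :=
  match n with
  | 0 => fun φ => match φ with
    | .and t0 _ => t0
    | φ => φ
  | _ + 1 => fun φ => match φ with
    | .and _ (.and (.dia _ _ ψ) _) => ψ
    | φ => φ

theorem projT_fullType {W : Type} [Fintype W] (R : I → W → W → Prop) (V : P → W → Prop) :
    ∀ (n : ℕ) (u : W), projT n (fullType R V (n + 1) u) = fullType R V n u := by
  intro n u
  cases n with
  | zero => rfl
  | succ n =>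
    show projT (n+1) (fullType R V (n+2) u) = fullType R V (n+1) u
    rw [fullType]
    rcases h : (Finset.univ : Finset I).toList with _ | ⟨α, rest⟩
    · rw [fullType]
      simp [h, projT, GMML.bigAnd]
    · simp [h, List.flatMap_cons, GMML.bigAnd, projT]

theorem filter_card_eq_count {α β : Type} [inst1 : DecidableEq β] (s : Finset α) (f : α → β) (b : β)
    [inst2 : DecidablePred fun a => f a = b] :
    (s.filter fun a => f a = b).card = Multiset.count b (s.val.map f) := by
  rw [Multiset.count_map]
  show Multiset.card (Multiset.filter _ s.val) = _
  congr 1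
  exact Multiset.filter_congr (fun x _ => eq_comm)

theorem count_map_succs {I W β : Type} [Fintype W] (R : I → W → W → Prop) (α : I) (v : W)
    (f : W → β) (b : β) [inst : DecidableEq β] :
    Multiset.count b ((succs R α v).val.map f) = {u | R α v u ∧ f u = b}.ncard := by
  rw [Multiset.count_map, ncard_filter]
  show (Multiset.filter _ (Multiset.filter _ Finset.univ.val)).card = _
  rw [Multiset.filter_filter]
  show _ = (Multiset.filter _ Finset.univ.val).card
  congr 1
  exact Multiset.filter_congr fun x _ => ⟨fun ⟨h1, h2⟩ => ⟨h2, h1.symm⟩, fun ⟨h1, h2⟩ => ⟨h2.symm, h1⟩⟩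

theorem filter_succs_card {I W β : Type} [Fintype W] (R : I → W → W → Prop) (α : I) (w : W)
    (f : W → β) (b : β) [inst : DecidablePred fun u => f u = b] :
    ((succs R α w).filter fun u => f u = b).card = {u | R α w u ∧ f u = b}.ncard := by
  rw [ncard_filter]
  congr 1
  ext u
  simp only [succs, Finset.mem_filter, Finset.mem_univ, true_and]

theorem image_eq_toFinset {α β : Type} [DecidableEq β] (s : Finset α) (f : α → β) :
    s.image f = (s.val.map f).toFinset := by
  ext x; simp

end Aux2
section Aux3

open Classical

variable {P I : Type} [Fintype P] [Fintype I]

theorem fullType_succ_eq {W W' : Type} [Fintype W] [Fintype W']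
    (R : I → W → W → Prop) (V : P → W → Prop)
    (R' : I → W' → W' → Prop) (V' : P → W' → Prop) (w : W) (v : W') (n : ℕ)
    (h0 : type0 (I := I) V' v = type0 V w)
    (hkey : fullType R' V' n v = fullType R V n w)
    (hd : ∀ α, (succs R' α v).card = (succs R α w).card)
    (hm : ∀ α, (succs R' α v).val.map (fullType R' V' n)
      = (succs R α w).val.map (fullType R V n)) :
    fullType R' V' (n + 1) v = fullType R V (n + 1) w := by
  rw [show fullType R' V' (n + 1) v =
      .and (type0 V' v)
        (GMML.bigAnd ((Finset.univ : Finset I).toList.flatMap fun α =>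
          .dia α 0 (fullType R' V' n v) ::
          GMML.diaEq α (succs R' α v).card .top ::
          (((succs R' α v).image (fullType R' V' n)).toList.map fun σ =>
            GMML.diaEq α
              ((succs R' α v).filter fun u => fullType R' V' n u = σ).card σ))) from rfl]
  rw [show fullType R V (n + 1) w =
      .and (type0 V w)
        (GMML.bigAnd ((Finset.univ : Finset I).toList.flatMap fun α =>
          .dia α 0 (fullType R V n w) ::
          GMML.diaEq α (succs R α w).card .top ::
          (((succs R α w).image (fullType R V n)).toList.map fun σ =>
            GMML.diaEq α
              ((succs R α w).filter fun u => fullType R V n u = σ).card σ))) from rfl]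
  rw [h0]
  refine congrArg _ (congrArg GMML.bigAnd (congrArg Finset.univ.toList.flatMap (funext fun α => ?_)))
  have himg : (succs R' α v).image (fullType R' V' n)
      = (succs R α w).image (fullType R V n) := by
    rw [image_eq_toFinset, image_eq_toFinset, hm α]
  rw [hkey, hd α, himg]
  simp only [List.cons.injEq, true_and]
  refine List.map_congr_left fun σ hσ => ?_
  congr 1
  haveI : DecidableEq (GMML P I) := Classical.decEq _
  rw [filter_card_eq_count, filter_card_eq_count, hm α]
  all_goals exact this

theorem fullType_eq_of_data {W W' : Type} [Fintype W] [Fintype W']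
    (R : I → W → W → Prop) (V : P → W → Prop)
    (R' : I → W' → W' → Prop) (V' : P → W' → Prop) (w : W) (v : W') :
    ∀ n : ℕ, type0 (I := I) V' v = type0 V w →
    (∀ α, (succs R' α v).card = (succs R α w).card) →
    (∀ α, (succs R' α v).val.map (fullType R' V' n)
      = (succs R α w).val.map (fullType R V n)) →
    fullType R' V' (n + 1) v = fullType R V (n + 1) w := by
  intro n
  induction n with
  | zero =>
    intro h0 hd hm
    exact fullType_succ_eq R V R' V' w v 0 h0 h0 hd hm
  | succ n ih =>
    intro h0 hd hm
    have hm' : ∀ α, (succs R' α v).val.map (fullType R' V' n)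
        = (succs R α w).val.map (fullType R V n) := by
      intro α
      have := congrArg (Multiset.map (projT n)) (hm α)
      simpa [Multiset.map_map, Function.comp, projT_fullType] using this
    exact fullType_succ_eq R V R' V' w v (n + 1) h0 (ih h0 hd hm') hd hm

end Aux3
section Aux4

open Classical

variable {P I : Type} [Fintype P] [Fintype I]

theorem data_of_sat {W W' : Type} [Fintype W] [Fintype W']
    (R : I → W → W → Prop) (V : P → W → Prop)
    (R' : I → W' → W' → Prop) (V' : P → W' → Prop) (w : W) (v : W') (n : ℕ)
    (IH : ∀ (u' : W') (u : W), GMML.Sat R' V' u' (fullType R V n u) ↔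
      fullType R' V' n u' = fullType R V n u)
    (h : GMML.Sat R' V' v (fullType R V (n + 1) w)) :
    type0 (I := I) V' v = type0 V w ∧ ∀ α : I,
      (succs R' α v).card = (succs R α w).card ∧
      (succs R' α v).val.map (fullType R' V' n)
        = (succs R α w).val.map (fullType R V n) := by
  rw [show fullType R V (n + 1) w =
      .and (type0 V w)
        (GMML.bigAnd ((Finset.univ : Finset I).toList.flatMap fun α =>
          .dia α 0 (fullType R V n w) ::
          GMML.diaEq α (succs R α w).card .top ::
          (((succs R α w).image (fullType R V n)).toList.map fun σ =>
            GMML.diaEq α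
              ((succs R α w).filter fun u => fullType R V n u = σ).card σ))) from rfl] at h
  obtain ⟨h0, hL⟩ : GMML.Sat R' V' v (type0 V w) ∧ GMML.Sat R' V' v _ := h
  rw [sat_bigAnd] at hL
  refine ⟨(sat_type0_iff R V R' V' w v).1 h0, fun α => ?_⟩
  have hdeg : (succs R' α v).card = (succs R α w).card := by
    have hs := hL (GMML.diaEq α (succs R α w).card .top)
      (List.mem_flatMap.2 ⟨α, by simp [Finset.mem_toList], by simp⟩)
    rw [sat_diaEq] at hs
    have hset : {u | R' α v u ∧ GMML.Sat R' V' u GMML.top} = {u | R' α v u} := by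
      ext u; simp [GMML.Sat]
    rw [hset, ncard_filter] at hs
    exact hs
  have hcnt : ∀ σ ∈ (succs R α w).image (fullType R V n),
      Multiset.count σ ((succs R' α v).val.map (fullType R' V' n))
        = Multiset.count σ ((succs R α w).val.map (fullType R V n)) := by
    intro σ hσ
    obtain ⟨w2, hw2, rfl⟩ := Finset.mem_image.1 hσ
    have hs := hL (GMML.diaEq α
        ((succs R α w).filter fun u => fullType R V n u = fullType R V n w2).card
        (fullType R V n w2))
      (List.mem_flatMap.2 ⟨α, by simp [Finset.mem_toList],
        by
          simp only [List.mem_cons]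
          right; right
          exact List.mem_map.2 ⟨fullType R V n w2, by rw [Finset.mem_toList]; exact hσ, rfl⟩⟩)
    rw [sat_diaEq] at hs
    have hset : {u | R' α v u ∧ GMML.Sat R' V' u (fullType R V n w2)}
        = {u | R' α v u ∧ fullType R' V' n u = fullType R V n w2} :=
      Set.ext fun u => and_congr_right fun _ => IH u w2
    rw [hset] at hs
    rw [count_map_succs, count_map_succs, hs]
    exact filter_succs_card R α w (fullType R V n) (fullType R V n w2)
  refine ⟨hdeg, ?_⟩
  have hcard : Multiset.card ((succs R' α v).val.map (fullType R' V' n))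
      = Multiset.card ((succs R α w).val.map (fullType R V n)) := by
    simpa using hdeg
  refine (Multiset.eq_of_le_of_card_le ?_ (le_of_eq hcard)).symm
  refine Multiset.le_iff_count.2 fun σ => ?_
  by_cases hσ : σ ∈ (succs R α w).image (fullType R V n)
  · exact le_of_eq (hcnt σ hσ).symm
  · have : Multiset.count σ ((succs R α w).val.map (fullType R V n)) = 0 := by
      refine Multiset.count_eq_zero.2 fun hmem => hσ ?_
      obtain ⟨u, hu, rfl⟩ := Multiset.mem_map.1 hmem
      exact Finset.mem_image.2 ⟨u, hu, rfl⟩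
    simp [this]

theorem sat_own {W : Type} [Fintype W] (R : I → W → W → Prop) (V : P → W → Prop)
    (n : ℕ) (v : W)
    (IH : ∀ (u u' : W), GMML.Sat R V u (fullType R V n u') ↔
      fullType R V n u = fullType R V n u') :
    GMML.Sat R V v (fullType R V (n + 1) v) := by
  rw [show fullType R V (n + 1) v =
      .and (type0 V v)
        (GMML.bigAnd ((Finset.univ : Finset I).toList.flatMap fun α =>
          .dia α 0 (fullType R V n v) ::
          GMML.diaEq α (succs R α v).card .top ::
          (((succs R α v).image (fullType R V n)).toList.map fun σ =>
            GMML.diaEq α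
              ((succs R α v).filter fun u => fullType R V n u = σ).card σ))) from rfl]
  refine ⟨sat_type0_self R V v, ?_⟩
  rw [sat_bigAnd]
  intro φ hφ
  obtain ⟨α, -, hφ⟩ := List.mem_flatMap.1 hφ
  rcases List.mem_cons.1 hφ with rfl | hφ
  · show (0 : ℕ) ≤ _
    exact Nat.zero_le _
  rcases List.mem_cons.1 hφ with rfl | hφ
  · rw [sat_diaEq]
    have hset : {u | R α v u ∧ GMML.Sat R V u GMML.top} = {u | R α v u} := by
      ext u; simp [GMML.Sat]
    rw [hset, ncard_filter]
    rfl
  · obtain ⟨σ, hσ, rfl⟩ := List.mem_map.1 hφ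
    rw [Finset.mem_toList] at hσ
    obtain ⟨w2, hw2, rfl⟩ := Finset.mem_image.1 hσ
    rw [sat_diaEq]
    have hset : {u | R α v u ∧ GMML.Sat R V u (fullType R V n w2)}
        = {u | R α v u ∧ fullType R V n u = fullType R V n w2} :=
      Set.ext fun u => and_congr_right fun _ => IH u w2
    rw [hset]
    exact (filter_succs_card R α v (fullType R V n) (fullType R V n w2)).symm

theorem sat_fullType_iff :
    ∀ (n : ℕ) (W W' : Type) [Fintype W] [Fintype W'] (R : I → W → W → Prop)
      (V : P → W → Prop) (R' : I → W' → W' → Prop) (V' : P → W' → Prop) (v : W') (w : W),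
      GMML.Sat R' V' v (fullType R V n w) ↔ fullType R' V' n v = fullType R V n w := by
  intro n
  induction n with
  | zero =>
    intro W W' _ _ R V R' V' v w
    exact sat_type0_iff R V R' V' w v
  | succ n ih =>
    intro W W' _ _ R V R' V' v w
    constructor
    · intro h
      obtain ⟨h0, hdata⟩ := data_of_sat R V R' V' w v n (fun u' u => ih W W' R V R' V' u' u) h
      exact fullType_eq_of_data R V R' V' w v n h0 (fun α => (hdata α).1) (fun α => (hdata α).2)
    · intro h
      rw [← h]
      exact sat_own R' V' n v (fun u u' => ih W' W' R' V' R' V' u u')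

end Aux4
section Aux5

open Classical

variable {P I : Type} [Fintype P] [Fintype I]

theorem fullType_down {W W' : Type} [Fintype W] [Fintype W']
    (R : I → W → W → Prop) (V : P → W → Prop)
    (R' : I → W' → W' → Prop) (V' : P → W' → Prop) (w : W) (v : W') (n : ℕ)
    (h : fullType R' V' (n + 1) v = fullType R V (n + 1) w) :
    fullType R' V' n v = fullType R V n w := by
  have := congrArg (projT n) h
  rwa [projT_fullType, projT_fullType] at this

theorem fullType_mono {W W' : Type} [Fintype W] [Fintype W']
    (R : I → W → W → Prop) (V : P → W → Prop)
    (R' : I → W' → W' → Prop) (V' : P → W' → Prop) (w : W) (v : W') :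
    ∀ n t, t ≤ n → fullType R' V' n v = fullType R V n w →
      fullType R' V' t v = fullType R V t w := by
  intro n
  induction n with
  | zero =>
    intro t ht h
    rw [Nat.le_zero.1 ht] at *
    exact h
  | succ n ih =>
    intro t ht h
    rcases Nat.lt_or_ge t (n + 1) with h1 | h1
    · exact ih t (by omega) (fullType_down R V R' V' w v n h)
    · have : t = n + 1 := by omega
      rw [this]; exact h

/-- Extract the `type0` component from a full type of depth `t`. -/
def extr0 : ℕ → GMML P I → GMML P I
  | 0, φ => φ
  | _ + 1, .and a _ => a
  | _ + 1, φ => φ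

theorem extr0_fullType {W : Type} [Fintype W] (R : I → W → W → Prop) (V : P → W → Prop)
    (t : ℕ) (w : W) : extr0 t (fullType R V t w) = type0 (I := I) V w := by
  cases t with
  | zero => rfl
  | succ t => rfl

end Aux5
section Aux6

open Classical

variable {P I : Type}

/-- Numeric encoding of GMML formulae. -/
def gcode (f : P → ℕ) (g : I → ℕ) : GMML P I → ℕ
  | .top => Nat.pair 0 0
  | .prop p => Nat.pair 1 (f p)
  | .neg φ => Nat.pair 2 (gcode f g φ)
  | .and φ ψ => Nat.pair 3 (Nat.pair (gcode f g φ) (gcode f g ψ))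
  | .dia α k φ => Nat.pair 4 (Nat.pair (g α) (Nat.pair k (gcode f g φ)))

theorem gcode_inj {f : P → ℕ} {g : I → ℕ} (hf : Function.Injective f)
    (hg : Function.Injective g) : Function.Injective (gcode f g) := by
  intro x
  induction x with
  | top =>
    intro y h
    cases y <;> simp [gcode, Nat.pair_eq_pair] at h ⊢
  | prop p =>
    intro y h
    cases y <;> simp [gcode, Nat.pair_eq_pair] at h ⊢
    rw [hf h]
  | neg φ ih =>
    intro y h
    cases y <;> simp [gcode, Nat.pair_eq_pair] at h ⊢
    rw [ih h]
  | and φ1 φ2 ih1 ih2 =>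
    intro y h
    cases y <;> simp [gcode, Nat.pair_eq_pair] at h ⊢
    rw [ih1 h.1, ih2 h.2]
    exact ⟨rfl, rfl⟩
  | dia α k φ ih =>
    intro y h
    cases y <;> simp [gcode, Nat.pair_eq_pair] at h ⊢
    rw [hg h.1, h.2.1, ih h.2.2]
    exact ⟨rfl, rfl, rfl⟩

instance [Countable P] [Countable I] : Countable (GMML P I) := by
  obtain ⟨f, hf⟩ := exists_injective_nat P
  obtain ⟨g, hg⟩ := exists_injective_nat I
  exact ⟨⟨gcode f g, gcode_inj hf hg⟩⟩

end Aux6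
section Aux7

open Classical

variable {P I : Type} [Fintype P] [Fintype I]

/-- The canonical automaton that computes full types (paired with a round counter). -/
noncomputable def typeAut (P I : Type) [Fintype P] [Fintype I] :
    CMMPA P I (ℕ × GMML P I) where
  π S := (0, GMML.bigAnd ((Finset.univ : Finset P).toList.map fun p =>
    if p ∈ S then .prop p else .neg (.prop p)))
  δ Nf q :=
    (q.1 + 1,
      .and (extr0 q.1 q.2)
        (GMML.bigAnd ((Finset.univ : Finset I).toList.flatMap fun α =>
          .dia α 0 q.2 ::
          GMML.diaEq α (Multiset.card ((Nf α).map Prod.snd)) .top ::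
          (((Nf α).map Prod.snd).toFinset.toList.map fun σ =>
            GMML.diaEq α (Multiset.count σ ((Nf α).map Prod.snd)) σ))))
  F := ∅

theorem run_typeAut {W : Type} [Fintype W] (R : I → W → W → Prop) (V : P → W → Prop) :
    ∀ (t : ℕ) (w : W), (typeAut P I).run R V t w = (t, fullType R V t w) := by
  intro t
  induction t with
  | zero =>
    intro w
    show ((0 : ℕ), GMML.bigAnd _) = ((0 : ℕ), type0 (I := I) V w)
    refine Prod.ext rfl ?_
    rw [type0]
    refine congrArg GMML.bigAnd (List.map_congr_left fun p _ => ?_)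
    by_cases h : V p w
    · simp [h, Set.mem_setOf_eq]
    · simp [h, Set.mem_setOf_eq]
  | succ t ih =>
    intro w
    show (typeAut P I).δ _ _ = _
    have hrun : (typeAut P I).run R V t = fun u => (t, fullType R V t u) := funext ih
    rw [hrun]
    have hms : ∀ α : I,
        ((((Finset.univ : Finset W).filter fun u => R α w u).val.map
          (fun u => ((t, fullType R V t u) : ℕ × GMML P I))).map Prod.snd)
        = (succs R α w).val.map (fullType R V t) := by
      intro α
      rw [Multiset.map_map]
      rfl
    show ((t + 1 : ℕ), _) = ((t + 1 : ℕ), _)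
    refine Prod.ext rfl ?_
    show GMML.and (extr0 t (fullType R V t w)) _ = _
    rw [extr0_fullType]
    rw [show fullType R V (t + 1) w =
      .and (type0 V w)
        (GMML.bigAnd ((Finset.univ : Finset I).toList.flatMap fun α =>
          .dia α 0 (fullType R V t w) ::
          GMML.diaEq α (succs R α w).card .top ::
          (((succs R α w).image (fullType R V t)).toList.map fun σ =>
            GMML.diaEq α
              ((succs R α w).filter fun u => fullType R V t u = σ).card σ))) from rfl]
    refine congrArg _ (congrArg GMML.bigAnd
      (congrArg Finset.univ.toList.flatMap (funext fun α => ?_)))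
    rw [hms α]
    have h2 : Multiset.card ((succs R α w).val.map (fullType R V t)) = (succs R α w).card := by
      simp
    rw [h2]
    have h3 : ((succs R α w).val.map (fullType R V t)).toFinset
        = (succs R α w).image (fullType R V t) := by
      rw [image_eq_toFinset]
    rw [h3]
    refine congrArg _ (congrArg _ (List.map_congr_left fun σ hσ => ?_))
    congr 1
    rw [filter_card_eq_count]

end Aux7
section Aux8

open Classical

variable {P I : Type} [Fintype P] [Fintype I]

theorem run_eq_of_fullType_eq {Q W W' : Type} [Fintype W] [Fintype W']
    (R : I → W → W → Prop) (V : P → W → Prop)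
    (R' : I → W' → W' → Prop) (V' : P → W' → Prop) (A : CMMPA P I Q) :
    ∀ (t : ℕ) (u : W) (u' : W'), fullType R V t u = fullType R' V' t u' →
      A.run R V t u = A.run R' V' t u' := by
  intro t
  induction t with
  | zero =>
    intro u u' h
    show A.π _ = A.π _
    congr 1
    exact Set.ext fun p => (type0_eq_iff V' V u' u).1 h p
  | succ t ih =>
    intro u u' h
    have h' := fullType_down R' V' R V u' u t h
    have hsat : GMML.Sat R' V' u' (fullType R V (t + 1) u) :=
      (sat_fullType_iff (t + 1) W W' R V R' V' u' u).2 h.symm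
    have hdata := data_of_sat R V R' V' u u' t
      (fun a b => sat_fullType_iff t W W' R V R' V' a b) hsat
    show A.δ _ _ = A.δ _ _
    have hN : (fun α => ((Finset.univ : Finset W).filter fun x => R α u x).val.map
          (A.run R V t))
        = (fun α => ((Finset.univ : Finset W').filter fun x => R' α u' x).val.map
          (A.run R' V' t)) := by
      funext α
      have hm := (hdata.2 α).2
      have hrel := Multiset.rel_map.1 (Multiset.rel_eq.2 hm.symm)
      exact Multiset.rel_eq.1 (Multiset.rel_map.2 (hrel.mono fun a _ b _ hab => ih a b hab))
    rw [hN, ih u u' h']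

end Aux8


/-- two finite pointed models satisfy the same full graded multimodal type
of modal depth `n` iff every counting multichannel message passing automaton assigns
them the same state in every round `t ≤ n`. -/
theorem same_full_type_iff_same_states {P I : Type} [Fintype P] [Fintype I]
    (M N : PKModel P I) (n : ℕ) :
    N.Sat (M.fullType n) ↔
      ∀ (Q : Type), Countable Q → ∀ A : CMMPA P I Q,
        ∀ t ≤ n, M.run A t M.pt = N.run A t N.pt := by
  haveI := M.fin
  haveI := N.fin
  letI : Fintype M.W := Fintype.ofFinite M.W
  letI : Fintype N.W := Fintype.ofFinite N.W
  constructor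
  · intro h Q hQ A t ht
    have h' : fullType N.R N.V n N.pt = fullType M.R M.V n M.pt :=
      (sat_fullType_iff n M.W N.W M.R M.V N.R N.V N.pt M.pt).1 h
    have ht' := fullType_mono M.R M.V N.R N.V M.pt N.pt n t ht h'
    show A.run M.R M.V t M.pt = A.run N.R N.V t N.pt
    exact run_eq_of_fullType_eq M.R M.V N.R N.V A t M.pt N.pt ht'.symm
  · intro h
    have hrun := h (ℕ × GMML P I) inferInstance (typeAut P I) n le_rfl
    have h2 : ((n : ℕ), fullType M.R M.V n M.pt) = ((n : ℕ), fullType N.R N.V n N.pt) := by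
      rw [← run_typeAut M.R M.V n M.pt, ← run_typeAut N.R N.V n N.pt]
      exact hrun
    have h3 := (Prod.ext_iff.1 h2).2
    show GMML.Sat N.R N.V N.pt (fullType M.R M.V n M.pt)
    exact (sat_fullType_iff n M.W N.W M.R M.V N.R N.V N.pt M.pt).2 h3.symm
end
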